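/- arXiv:1201.0891 — 2 statements merged into one kernel-verified Lean document; each statement's English description precedes it below -/
import Mathlib

section
/- For every positive semidefinite d×d matrix ρ with tr(ρ) ≤ 1 and every n ≥ 0: if H_R̄_n(ρ) = H_R̄_{n+1}(ρ), then the reachable space H_R(ρ) = ⋁{supp(T_f(ρ)) : f a word over {1,…,m}} equals H_R̄_n(ρ). -/
noncomputable section
open Matrix
open scoped ComplexOrder

variable {d m r : ℕ}

/-- One step of process `i`: `T_i(ρ) = E_i(M₁ ρ M₁†) = ∑_j (E_{i,j} M₁) ρ (E_{i,j} M₁)†`. -/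
def Tstep (E : Fin m → Fin r → Matrix (Fin d) (Fin d) ℂ)
    (M1 : Matrix (Fin d) (Fin d) ℂ) (i : Fin m)
    (ρ : Matrix (Fin d) (Fin d) ℂ) : Matrix (Fin d) (Fin d) ℂ :=
  ∑ j, (E i j * M1) * ρ * (E i j * M1)ᴴ

/-- `T_f` for a word `f = s₁⋯s_n`: apply `T_{s₁}` first, then `T_{s₂}`, …, `T_{s_n}`. -/
def Tword (E : Fin m → Fin r → Matrix (Fin d) (Fin d) ℂ)
    (M1 : Matrix (Fin d) (Fin d) ℂ) (f : List (Fin m))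
    (ρ : Matrix (Fin d) (Fin d) ℂ) : Matrix (Fin d) (Fin d) ℂ :=
  f.foldl (fun σ k => Tstep E M1 k σ) ρ

/-- The support of a matrix: its column space, as a subspace of `ℂ^d`. -/
def supp (A : Matrix (Fin d) (Fin d) ℂ) : Submodule ℂ (Fin d → ℂ) :=
  LinearMap.range (Matrix.toLin' A)

/-- Length-`n` prefix of a schedule. -/
def prefixn (s : ℕ → Fin m) (n : ℕ) : List (Fin m) :=
  List.ofFn (fun i : Fin n => s i)

/-- Termination probability within a word `f`. -/
def tWord (E : Fin m → Fin r → Matrix (Fin d) (Fin d) ℂ)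
    (M0 M1 : Matrix (Fin d) (Fin d) ℂ) (f : List (Fin m))
    (ρ : Matrix (Fin d) (Fin d) ℂ) : ℝ :=
  ∑ n ∈ Finset.range (f.length + 1),
    (M0 * Tword E M1 (f.take n) ρ * M0ᴴ).trace.re

/-- Termination probability along a schedule `s`. -/
def tSched (E : Fin m → Fin r → Matrix (Fin d) (Fin d) ℂ)
    (M0 M1 : Matrix (Fin d) (Fin d) ℂ) (s : ℕ → Fin m)
    (ρ : Matrix (Fin d) (Fin d) ℂ) : ℝ :=
  ∑' n : ℕ, (M0 * Tword E M1 (prefixn s n) ρ * M0ᴴ).trace.re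

/-- Termination probability `t(ρ)`: infimum over all schedules. -/
def tInf (E : Fin m → Fin r → Matrix (Fin d) (Fin d) ℂ)
    (M0 M1 : Matrix (Fin d) (Fin d) ℂ)
    (ρ : Matrix (Fin d) (Fin d) ℂ) : ℝ :=
  ⨅ s : ℕ → Fin m, tSched E M0 M1 s ρ

/-- The reachable space `H_{R(ρ)}`. -/
def HR (E : Fin m → Fin r → Matrix (Fin d) (Fin d) ℂ)
    (M1 : Matrix (Fin d) (Fin d) ℂ)
    (ρ : Matrix (Fin d) (Fin d) ℂ) : Submodule ℂ (Fin d → ℂ) :=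
  ⨆ f : List (Fin m), supp (Tword E M1 f ρ)

/-- The average super-operator `T = (1/m) ∑ T_i`. -/
def Tavg (E : Fin m → Fin r → Matrix (Fin d) (Fin d) ℂ)
    (M1 : Matrix (Fin d) (Fin d) ℂ)
    (ρ : Matrix (Fin d) (Fin d) ℂ) : Matrix (Fin d) (Fin d) ℂ :=
  ((m : ℂ)⁻¹) • ∑ i : Fin m, Tstep E M1 i ρ

/-- `H_{R̄_n(ρ)} = ⋁_{k=0}^n supp(T^k(ρ))`. -/
def HRbar (E : Fin m → Fin r → Matrix (Fin d) (Fin d) ℂ)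
    (M1 : Matrix (Fin d) (Fin d) ℂ)
    (ρ : Matrix (Fin d) (Fin d) ℂ) (n : ℕ) : Submodule ℂ (Fin d → ℂ) :=
  ⨆ k : Fin (n + 1), supp ((Tavg E M1)^[k] ρ)

/-- Reachable termination probability `h(ρ)`. -/
def hProb (E : Fin m → Fin r → Matrix (Fin d) (Fin d) ℂ)
    (M0 M1 : Matrix (Fin d) (Fin d) ℂ)
    (ρ : Matrix (Fin d) (Fin d) ℂ) : ℝ :=
  sInf { x : ℝ | ∃ σ : Matrix (Fin d) (Fin d) ℂ,
    σ.PosSemidef ∧ σ.trace = 1 ∧ supp σ ≤ HR E M1 ρ ∧ x = tInf E M0 M1 σ }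

/-- `PD_f`: pure states diverging within the word `f`. -/
def PDword (E : Fin m → Fin r → Matrix (Fin d) (Fin d) ℂ)
    (M0 M1 : Matrix (Fin d) (Fin d) ℂ) (f : List (Fin m)) : Set (Fin d → ℂ) :=
  { x : Fin d → ℂ | tWord E M0 M1 f (Matrix.vecMulVec x (star x)) = 0 }

/-- `PD_n`: union of `PD_f` over words of length `n`. -/
def PDn (E : Fin m → Fin r → Matrix (Fin d) (Fin d) ℂ)
    (M0 M1 : Matrix (Fin d) (Fin d) ℂ) (n : ℕ) : Set (Fin d → ℂ) :=
  { x : Fin d → ℂ | ∃ f : List (Fin m), f.length = n ∧ x ∈ PDword E M0 M1 f }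

/-- `PD`: the diverging pure states. -/
def PD (E : Fin m → Fin r → Matrix (Fin d) (Fin d) ℂ)
    (M0 M1 : Matrix (Fin d) (Fin d) ℂ) : Set (Fin d → ℂ) :=
  { x : Fin d → ℂ | ∃ s : ℕ → Fin m, tSched E M0 M1 s (Matrix.vecMulVec x (star x)) = 0 }

/-! On positive semidefinite matrices the support of `K ρ K†` is the image of `supp ρ` under
`K`, and supports of sums are joins. Hence `supp (T_f ρ)` and `supp (T^k ρ)` are computed by the
subspace map `V ↦ ⋁_{i,j} E_{i,j} M₁ V`, which preserves joins. Both `H_R(ρ)` and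
`⋁_k supp (T^k ρ)` are then the join of all iterates of this map on `supp ρ`, and once the
partial joins stabilise they are closed under the map, so no later iterate adds anything. -/

theorem Monotone.iterate_le_of_le_of_map_le {α : Type*} [Preorder α] {f : α → α}
    (hf : Monotone f) {x y : α} (hxy : x ≤ y) (hy : f y ≤ y) (k : ℕ) : f^[k] x ≤ y := by
  induction k with
  | zero => exact hxy
  | succ k ih => rw [Function.iterate_succ_apply']; exact (hf ih).trans hy

theorem GaloisConnection.iSup_iterate_eq_of_stable {α : Type*} [CompleteLattice α]
    {l u : α → α} (gc : GaloisConnection l u) {x : α} {n : ℕ}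
    (h : ⨆ k : Fin (n + 1), l^[k] x = ⨆ k : Fin (n + 2), l^[k] x) :
    ⨆ k, l^[k] x = ⨆ k : Fin (n + 1), l^[k] x := by
  have hclosed : l (⨆ k : Fin (n + 1), l^[k] x) ≤ ⨆ k : Fin (n + 1), l^[k] x := by
    rw [gc.l_iSup, h]
    refine iSup_le fun k => le_iSup_of_le k.succ ?_
    rw [Fin.val_succ, Function.iterate_succ_apply']
  refine le_antisymm (iSup_le fun k => ?_) (iSup_le fun k => le_iSup (fun k => l^[k] x) k)
  exact gc.monotone_l.iterate_le_of_le_of_map_le (le_iSup_of_le 0 le_rfl) hclosed k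

section KrausImage

variable {R M N ι : Type*} [CommSemiring R] [AddCommMonoid M] [Module R M]
  [AddCommMonoid N] [Module R N]

def krausImage (K : ι → M →ₗ[R] N) (V : Submodule R M) : Submodule R N :=
  ⨆ j, V.map (K j)

theorem gc_krausImage (K : ι → M →ₗ[R] N) :
    GaloisConnection (krausImage K) fun W => ⨅ j, W.comap (K j) := fun V W => by
  simp only [krausImage, iSup_le_iff, le_iInf_iff, Submodule.map_le_iff_le_comap]

end KrausImage

namespace Matrix

theorem range_mulVecLin_mul_conjTranspose {R n k : Type*} [Field R] [PartialOrder R]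
    [StarRing R] [StarOrderedRing R] [Fintype n] [Fintype k] (B : Matrix n k R) :
    LinearMap.range (B * Bᴴ).mulVecLin = LinearMap.range B.mulVecLin := by
  refine Submodule.eq_of_le_of_finrank_le ?_ (rank_self_mul_conjTranspose B).ge
  rw [mulVecLin_mul]
  exact LinearMap.range_comp_le_range _ _

theorem range_mulVecLin_fromCols {R n k₁ k₂ : Type*} [CommSemiring R]
    [Fintype k₁] [Fintype k₂] (B : Matrix n k₁ R) (C : Matrix n k₂ R) :
    LinearMap.range (fromCols B C).mulVecLin =
      LinearMap.range B.mulVecLin ⊔ LinearMap.range C.mulVecLin := by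
  refine le_antisymm ?_ (sup_le ?_ ?_)
  · rintro _ ⟨v, rfl⟩
    rw [mulVecLin_apply, fromCols_mulVec]
    exact Submodule.add_mem_sup ⟨_, rfl⟩ ⟨_, rfl⟩
  · rintro _ ⟨v, rfl⟩
    exact ⟨Sum.elim v 0, by simp⟩
  · rintro _ ⟨v, rfl⟩
    exact ⟨Sum.elim 0 v, by simp⟩

open scoped MatrixOrder in
theorem PosSemidef.exists_eq_mul_conjTranspose {𝕜 n : Type*} [RCLike 𝕜] [Fintype n]
    [DecidableEq n] {A : Matrix n n 𝕜} (hA : A.PosSemidef) :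
    ∃ B : Matrix n n 𝕜, A = B * Bᴴ := by
  obtain ⟨B, rfl⟩ := CStarAlgebra.nonneg_iff_eq_star_mul_self.mp hA.nonneg
  exact ⟨Bᴴ, by rw [conjTranspose_conjTranspose, star_eq_conjTranspose]⟩

end Matrix

section Support

theorem supp_smul {c : ℂ} (hc : c ≠ 0) (A : Matrix (Fin d) (Fin d) ℂ) :
    supp (c • A) = supp A := by
  rw [supp, map_smul, LinearMap.range_smul _ _ hc, supp]

theorem supp_mul_conjTranspose {k : Type*} [Fintype k] (B : Matrix (Fin d) k ℂ) :
    supp (B * Bᴴ) = LinearMap.range B.mulVecLin :=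
  range_mulVecLin_mul_conjTranspose B

theorem supp_conj {A : Matrix (Fin d) (Fin d) ℂ} (hA : A.PosSemidef)
    (K : Matrix (Fin d) (Fin d) ℂ) : supp (K * A * Kᴴ) = (supp A).map (toLin' K) := by
  obtain ⟨B, rfl⟩ := hA.exists_eq_mul_conjTranspose
  rw [show K * (B * Bᴴ) * Kᴴ = (K * B) * (K * B)ᴴ by
      simp [conjTranspose_mul, Matrix.mul_assoc],
    supp_mul_conjTranspose, supp_mul_conjTranspose, mulVecLin_mul, LinearMap.range_comp]
  rfl

theorem supp_add {A B : Matrix (Fin d) (Fin d) ℂ} (hA : A.PosSemidef) (hB : B.PosSemidef) :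
    supp (A + B) = supp A ⊔ supp B := by
  obtain ⟨P, rfl⟩ := hA.exists_eq_mul_conjTranspose
  obtain ⟨Q, rfl⟩ := hB.exists_eq_mul_conjTranspose
  rw [show P * Pᴴ + Q * Qᴴ = fromCols P Q * (fromCols P Q)ᴴ by
      simp [conjTranspose_fromCols_eq_fromRows_conjTranspose, fromCols_mul_fromRows],
    supp_mul_conjTranspose, supp_mul_conjTranspose, supp_mul_conjTranspose,
    range_mulVecLin_fromCols]

theorem supp_sum {ι : Type*} (s : Finset ι) {A : ι → Matrix (Fin d) (Fin d) ℂ}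
    (hA : ∀ i ∈ s, (A i).PosSemidef) : supp (∑ i ∈ s, A i) = ⨆ i ∈ s, supp (A i) := by
  classical
  induction s using Finset.induction_on with
  | empty => simp [supp]
  | insert i s hi ih =>
    rw [Finset.sum_insert hi, Finset.iSup_insert,
      supp_add (hA i (s.mem_insert_self i)) (posSemidef_sum s fun j hj => hA j (by simp [hj])),
      ih fun j hj => hA j (by simp [hj])]

theorem supp_sum_conj {ι : Type*} [Fintype ι] (K : ι → Matrix (Fin d) (Fin d) ℂ)
    {A : Matrix (Fin d) (Fin d) ℂ} (hA : A.PosSemidef) :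
    supp (∑ j, K j * A * (K j)ᴴ) = krausImage (fun j => toLin' (K j)) (supp A) := by
  rw [supp_sum _ fun j _ => hA.mul_mul_conjTranspose_same (K j)]
  simp only [Finset.mem_univ, iSup_pos, supp_conj hA, krausImage]

end Support

section Reachability

variable (E : Fin m → Fin r → Matrix (Fin d) (Fin d) ℂ) (M1 : Matrix (Fin d) (Fin d) ℂ)

def reachStep : Submodule ℂ (Fin d → ℂ) → Submodule ℂ (Fin d → ℂ) :=
  krausImage fun p : Fin m × Fin r => toLin' (E p.1 p.2 * M1)

theorem gc_reachStep :
    GaloisConnection (reachStep E M1)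
      fun W => ⨅ p : Fin m × Fin r, W.comap (toLin' (E p.1 p.2 * M1)) :=
  gc_krausImage _

variable {E M1}

theorem Tstep_posSemidef (i : Fin m) {σ : Matrix (Fin d) (Fin d) ℂ} (hσ : σ.PosSemidef) :
    (Tstep E M1 i σ).PosSemidef :=
  posSemidef_sum _ fun _ _ => hσ.mul_mul_conjTranspose_same _

theorem Tavg_posSemidef {σ : Matrix (Fin d) (Fin d) ℂ} (hσ : σ.PosSemidef) :
    (Tavg E M1 σ).PosSemidef := by
  refine (posSemidef_sum _ fun i _ => Tstep_posSemidef i hσ).smul ?_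
  positivity

theorem Tword_posSemidef (f : List (Fin m)) {σ : Matrix (Fin d) (Fin d) ℂ}
    (hσ : σ.PosSemidef) : (Tword E M1 f σ).PosSemidef := by
  induction f generalizing σ with
  | nil => exact hσ
  | cons i f ih => exact ih (Tstep_posSemidef i hσ)

theorem supp_Tstep (i : Fin m) {σ : Matrix (Fin d) (Fin d) ℂ} (hσ : σ.PosSemidef) :
    supp (Tstep E M1 i σ) = krausImage (fun j => toLin' (E i j * M1)) (supp σ) :=
  supp_sum_conj _ hσ

theorem supp_Tstep_le (i : Fin m) {σ : Matrix (Fin d) (Fin d) ℂ} (hσ : σ.PosSemidef) :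
    supp (Tstep E M1 i σ) ≤ reachStep E M1 (supp σ) := by
  rw [supp_Tstep i hσ]
  exact iSup_le fun j => le_iSup_of_le (i, j) le_rfl

theorem supp_Tavg {σ : Matrix (Fin d) (Fin d) ℂ} (hσ : σ.PosSemidef) :
    supp (Tavg E M1 σ) = reachStep E M1 (supp σ) := by
  rcases Nat.eq_zero_or_pos m with rfl | hm
  · simp [Tavg, reachStep, krausImage, supp, iSup_of_empty]
  rw [Tavg, supp_smul (by simpa using hm.ne'), reachStep, ← supp_sum_conj _ hσ,
    Fintype.sum_prod_type]
  rfl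

theorem supp_iterate_Tavg {ρ : Matrix (Fin d) (Fin d) ℂ} (hρ : ρ.PosSemidef) (k : ℕ) :
    supp ((Tavg E M1)^[k] ρ) = (reachStep E M1)^[k] (supp ρ) := by
  induction k generalizing ρ with
  | zero => rfl
  | succ k ih =>
    rw [Function.iterate_succ_apply, Function.iterate_succ_apply, ih (Tavg_posSemidef hρ),
      supp_Tavg hρ]

theorem HRbar_eq_iSup_iterate {ρ : Matrix (Fin d) (Fin d) ℂ} (hρ : ρ.PosSemidef) (n : ℕ) :
    HRbar E M1 ρ n = ⨆ k : Fin (n + 1), (reachStep E M1)^[k] (supp ρ) :=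
  iSup_congr fun k => supp_iterate_Tavg hρ k

theorem reachStep_mono : Monotone (reachStep E M1) :=
  (gc_reachStep E M1).monotone_l

theorem supp_Tword_le (f : List (Fin m)) {σ : Matrix (Fin d) (Fin d) ℂ} (hσ : σ.PosSemidef) :
    supp (Tword E M1 f σ) ≤ (reachStep E M1)^[f.length] (supp σ) := by
  induction f generalizing σ with
  | nil => exact le_rfl
  | cons i f ih =>
    exact (ih (Tstep_posSemidef i hσ)).trans
      (reachStep_mono.iterate _ (supp_Tstep_le i hσ))

theorem Tword_append_singleton (f : List (Fin m)) (i : Fin m) (σ : Matrix (Fin d) (Fin d) ℂ) :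
    Tword E M1 (f ++ [i]) σ = Tstep E M1 i (Tword E M1 f σ) := by
  simp [Tword]

theorem reachStep_HR_le {ρ : Matrix (Fin d) (Fin d) ℂ} (hρ : ρ.PosSemidef) :
    reachStep E M1 (HR E M1 ρ) ≤ HR E M1 ρ := by
  rw [HR, (gc_reachStep E M1).l_iSup]
  refine iSup_le fun f => iSup_le fun ⟨i, j⟩ => le_iSup_of_le (f ++ [i]) ?_
  rw [Tword_append_singleton, supp_Tstep i (Tword_posSemidef f hρ)]
  exact le_iSup_of_le j le_rfl

theorem HR_eq_iSup_iterate {ρ : Matrix (Fin d) (Fin d) ℂ} (hρ : ρ.PosSemidef) :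
    HR E M1 ρ = ⨆ k, (reachStep E M1)^[k] (supp ρ) := by
  refine le_antisymm (iSup_le fun f => ?_) (iSup_le fun k => ?_)
  · exact (supp_Tword_le f hρ).trans (le_iSup (fun k => (reachStep E M1)^[k] (supp ρ)) _)
  · exact reachStep_mono.iterate_le_of_le_of_map_le
      (le_iSup (fun f => supp (Tword E M1 f ρ)) []) (reachStep_HR_le hρ) k

end Reachability

theorem reachable_space_eq_of_stable_general (d m r : ℕ)
    (E : Fin m → Fin r → Matrix (Fin d) (Fin d) ℂ)
    (M1 : Matrix (Fin d) (Fin d) ℂ)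
    (ρ : Matrix (Fin d) (Fin d) ℂ) (hρ : ρ.PosSemidef)
    (n : ℕ) (hstab : HRbar E M1 ρ n = HRbar E M1 ρ (n + 1)) :
    HR E M1 ρ = HRbar E M1 ρ n := by
  rw [HRbar_eq_iSup_iterate hρ, HRbar_eq_iSup_iterate hρ] at hstab
  rw [HR_eq_iSup_iterate hρ, HRbar_eq_iSup_iterate hρ]
  exact (gc_reachStep E M1).iSup_iterate_eq_of_stable hstab

/-- if `H_R̄_n(ρ) = H_R̄_{n+1}(ρ)` then the reachable space `H_R(ρ)`
equals `H_R̄_n(ρ)`. -/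
theorem reachable_space_eq_of_stable (d m r : ℕ) (hd : 0 < d) (hm : 0 < m)
    (E : Fin m → Fin r → Matrix (Fin d) (Fin d) ℂ)
    (hE : ∀ i, ∑ j, (E i j)ᴴ * E i j = 1)
    (M0 M1 : Matrix (Fin d) (Fin d) ℂ)
    (hM : M0ᴴ * M0 + M1ᴴ * M1 = 1)
    (ρ : Matrix (Fin d) (Fin d) ℂ) (hρ : ρ.PosSemidef) (htr : ρ.trace ≤ 1)
    (n : ℕ) (hstab : HRbar E M1 ρ n = HRbar E M1 ρ (n + 1)) :
    HR E M1 ρ = HRbar E M1 ρ n :=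
  reachable_space_eq_of_stable_general d m r E M1 ρ hρ n hstab
end
end

section
/- If ρ_1 and ρ_2 are positive semidefinite d×d matrices with tr(ρ_1 + ρ_2) ≤ 1, then t(ρ_1 + ρ_2) = tr(ρ_1 + ρ_2) if and only if t(ρ_1) = tr(ρ_1) and t(ρ_2) = tr(ρ_2). -/
noncomputable section
open Matrix
open scoped ComplexOrder

variable {d m r : ℕ}

/-!
Every schedule `s` gives a map `t_s` that is additive on positive semidefinite matrices (the
super-operators are linear and the series converge) and satisfies `t_s(ρ) ≤ tr ρ`, because its partial
sums telescope to `tr ρ - tr T_{s(≤N)}(ρ)`. Hence `t(ρ) = tr ρ` means `t_s(ρ) = tr ρ` for every `s`, and a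
sum `t_s(ρ₁) + t_s(ρ₂)` of two quantities each bounded by its trace reaches `tr ρ₁ + tr ρ₂` exactly when
both bounds are attained.
-/

section

variable (E : Fin m → Fin r → Matrix (Fin d) (Fin d) ℂ) (M0 M1 : Matrix (Fin d) (Fin d) ℂ)

lemma Tstep_add (i : Fin m) (ρ σ : Matrix (Fin d) (Fin d) ℂ) :
    Tstep E M1 i (ρ + σ) = Tstep E M1 i ρ + Tstep E M1 i σ := by
  simp [Tstep, mul_add, add_mul, Finset.sum_add_distrib]

lemma Tword_add (f : List (Fin m)) (ρ σ : Matrix (Fin d) (Fin d) ℂ) :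
    Tword E M1 f (ρ + σ) = Tword E M1 f ρ + Tword E M1 f σ := by
  induction f generalizing ρ σ with
  | nil => rfl
  | cons k f ih => simp only [Tword, List.foldl_cons, Tstep_add]; exact ih _ _

lemma posSemidef_Tstep (i : Fin m) {ρ : Matrix (Fin d) (Fin d) ℂ} (hρ : ρ.PosSemidef) :
    (Tstep E M1 i ρ).PosSemidef :=
  Matrix.posSemidef_sum _ fun _ _ => hρ.mul_mul_conjTranspose_same _

lemma posSemidef_Tword (f : List (Fin m)) {ρ : Matrix (Fin d) (Fin d) ℂ} (hρ : ρ.PosSemidef) :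
    (Tword E M1 f ρ).PosSemidef := by
  induction f generalizing ρ with
  | nil => exact hρ
  | cons k f ih => exact ih (posSemidef_Tstep E M1 k hρ)

lemma trace_Tstep (hE : ∀ i, ∑ j, (E i j)ᴴ * E i j = 1) (i : Fin m)
    (σ : Matrix (Fin d) (Fin d) ℂ) :
    (Tstep E M1 i σ).trace = (M1ᴴ * M1 * σ).trace := by
  have cycle : ∀ j, ((E i j * M1) * σ * (E i j * M1)ᴴ).trace
      = ((E i j)ᴴ * E i j * (M1 * σ * M1ᴴ)).trace := fun j => by
    rw [Matrix.conjTranspose_mul, ← Matrix.trace_mul_cycle (E i j) (M1 * σ * M1ᴴ) (E i j)ᴴ]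
    simp only [Matrix.mul_assoc]
  simp_rw [Tstep, Matrix.trace_sum, cycle, ← Matrix.trace_sum, ← Finset.sum_mul, hE i, one_mul]
  rw [Matrix.trace_mul_cycle M1 σ M1ᴴ]

lemma trace_M0_conj (hE : ∀ i, ∑ j, (E i j)ᴴ * E i j = 1) (hM : M0ᴴ * M0 + M1ᴴ * M1 = 1)
    (i : Fin m) (σ : Matrix (Fin d) (Fin d) ℂ) :
    (M0 * σ * M0ᴴ).trace = σ.trace - (Tstep E M1 i σ).trace := by
  rw [trace_Tstep E M1 hE i σ, Matrix.trace_mul_cycle M0 σ M0ᴴ, eq_sub_of_add_eq hM, sub_mul,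
    one_mul, Matrix.trace_sub]

lemma Tword_prefixn_succ (s : ℕ → Fin m) (n : ℕ) (ρ : Matrix (Fin d) (Fin d) ℂ) :
    Tword E M1 (prefixn s (n + 1)) ρ = Tstep E M1 (s n) (Tword E M1 (prefixn s n) ρ) := by
  have hsnoc : prefixn s (n + 1) = prefixn s n ++ [s n] := by
    rw [prefixn, List.ofFn_succ', List.concat_eq_append]
    rfl
  simp [hsnoc, Tword]

lemma sum_range_trace_M0_conj (hE : ∀ i, ∑ j, (E i j)ᴴ * E i j = 1)
    (hM : M0ᴴ * M0 + M1ᴴ * M1 = 1) (s : ℕ → Fin m) (ρ : Matrix (Fin d) (Fin d) ℂ) (N : ℕ) :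
    ∑ n ∈ Finset.range N, (M0 * Tword E M1 (prefixn s n) ρ * M0ᴴ).trace.re
      = ρ.trace.re - (Tword E M1 (prefixn s N) ρ).trace.re := by
  have step : ∀ n, (M0 * Tword E M1 (prefixn s n) ρ * M0ᴴ).trace.re
      = (Tword E M1 (prefixn s n) ρ).trace.re - (Tword E M1 (prefixn s (n + 1)) ρ).trace.re :=
    fun n => by rw [trace_M0_conj E M0 M1 hE hM (s n), Tword_prefixn_succ, Complex.sub_re]
  rw [Finset.sum_congr rfl fun n _ => step n, Finset.sum_range_sub']
  rfl

lemma trace_M0_conj_Tword_nonneg {ρ : Matrix (Fin d) (Fin d) ℂ} (hρ : ρ.PosSemidef)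
    (f : List (Fin m)) : 0 ≤ (M0 * Tword E M1 f ρ * M0ᴴ).trace.re :=
  (Complex.nonneg_iff.mp
    ((posSemidef_Tword E M1 f hρ).mul_mul_conjTranspose_same M0).trace_nonneg).1

lemma sum_range_trace_M0_conj_le (hE : ∀ i, ∑ j, (E i j)ᴴ * E i j = 1)
    (hM : M0ᴴ * M0 + M1ᴴ * M1 = 1) {ρ : Matrix (Fin d) (Fin d) ℂ} (hρ : ρ.PosSemidef)
    (s : ℕ → Fin m) (N : ℕ) :
    ∑ n ∈ Finset.range N, (M0 * Tword E M1 (prefixn s n) ρ * M0ᴴ).trace.re ≤ ρ.trace.re := by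
  rw [sum_range_trace_M0_conj E M0 M1 hE hM]
  have := (Complex.nonneg_iff.mp (posSemidef_Tword E M1 (prefixn s N) hρ).trace_nonneg).1
  linarith

lemma summable_trace_M0_conj (hE : ∀ i, ∑ j, (E i j)ᴴ * E i j = 1)
    (hM : M0ᴴ * M0 + M1ᴴ * M1 = 1) {ρ : Matrix (Fin d) (Fin d) ℂ} (hρ : ρ.PosSemidef)
    (s : ℕ → Fin m) :
    Summable fun n => (M0 * Tword E M1 (prefixn s n) ρ * M0ᴴ).trace.re :=
  summable_of_sum_range_le (fun _ => trace_M0_conj_Tword_nonneg E M0 M1 hρ _)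
    (sum_range_trace_M0_conj_le E M0 M1 hE hM hρ s)

lemma tSched_nonneg {ρ : Matrix (Fin d) (Fin d) ℂ} (hρ : ρ.PosSemidef) (s : ℕ → Fin m) :
    0 ≤ tSched E M0 M1 s ρ :=
  tsum_nonneg fun _ => trace_M0_conj_Tword_nonneg E M0 M1 hρ _

lemma tSched_le_trace (hE : ∀ i, ∑ j, (E i j)ᴴ * E i j = 1)
    (hM : M0ᴴ * M0 + M1ᴴ * M1 = 1) {ρ : Matrix (Fin d) (Fin d) ℂ} (hρ : ρ.PosSemidef)
    (s : ℕ → Fin m) : tSched E M0 M1 s ρ ≤ ρ.trace.re :=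
  (summable_trace_M0_conj E M0 M1 hE hM hρ s).tsum_le_of_sum_range_le
    (sum_range_trace_M0_conj_le E M0 M1 hE hM hρ s)

lemma tSched_add (hE : ∀ i, ∑ j, (E i j)ᴴ * E i j = 1) (hM : M0ᴴ * M0 + M1ᴴ * M1 = 1)
    {ρ σ : Matrix (Fin d) (Fin d) ℂ} (hρ : ρ.PosSemidef) (hσ : σ.PosSemidef) (s : ℕ → Fin m) :
    tSched E M0 M1 s (ρ + σ) = tSched E M0 M1 s ρ + tSched E M0 M1 s σ := by
  rw [tSched, tSched, tSched, ← (summable_trace_M0_conj E M0 M1 hE hM hρ s).tsum_add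
    (summable_trace_M0_conj E M0 M1 hE hM hσ s)]
  simp only [Tword_add, Matrix.mul_add, Matrix.add_mul, Matrix.trace_add, Complex.add_re]

lemma tInf_eq_trace_iff (hm : 0 < m) (hE : ∀ i, ∑ j, (E i j)ᴴ * E i j = 1)
    (hM : M0ᴴ * M0 + M1ᴴ * M1 = 1) {ρ : Matrix (Fin d) (Fin d) ℂ} (hρ : ρ.PosSemidef) :
    tInf E M0 M1 ρ = ρ.trace.re ↔ ∀ s, tSched E M0 M1 s ρ = ρ.trace.re := by
  have : Nonempty (ℕ → Fin m) := ⟨fun _ => ⟨0, hm⟩⟩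
  have hbdd : BddBelow (Set.range fun s => tSched E M0 M1 s ρ) :=
    ⟨0, by rintro _ ⟨s, rfl⟩; exact tSched_nonneg E M0 M1 hρ s⟩
  constructor
  · intro h s
    exact le_antisymm (tSched_le_trace E M0 M1 hE hM hρ s) (h ▸ ciInf_le hbdd s)
  · intro h
    rw [tInf, funext h, ciInf_const]

lemma tSched_add_eq_trace_iff (hE : ∀ i, ∑ j, (E i j)ᴴ * E i j = 1)
    (hM : M0ᴴ * M0 + M1ᴴ * M1 = 1) {ρ σ : Matrix (Fin d) (Fin d) ℂ} (hρ : ρ.PosSemidef)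
    (hσ : σ.PosSemidef) (s : ℕ → Fin m) :
    tSched E M0 M1 s (ρ + σ) = (ρ + σ).trace.re ↔
      tSched E M0 M1 s ρ = ρ.trace.re ∧ tSched E M0 M1 s σ = σ.trace.re := by
  rw [tSched_add E M0 M1 hE hM hρ hσ, Matrix.trace_add, Complex.add_re]
  exact add_eq_add_iff_eq_and_eq (tSched_le_trace E M0 M1 hE hM hρ s)
    (tSched_le_trace E M0 M1 hE hM hσ s)

end

theorem terminating_add_iff_general (d m r : ℕ) (hm : 0 < m)
    (E : Fin m → Fin r → Matrix (Fin d) (Fin d) ℂ)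
    (hE : ∀ i, ∑ j, (E i j)ᴴ * E i j = 1)
    (M0 M1 : Matrix (Fin d) (Fin d) ℂ)
    (hM : M0ᴴ * M0 + M1ᴴ * M1 = 1)
    (ρ₁ ρ₂ : Matrix (Fin d) (Fin d) ℂ)
    (hρ₁ : ρ₁.PosSemidef) (hρ₂ : ρ₂.PosSemidef) :
    tInf E M0 M1 (ρ₁ + ρ₂) = (ρ₁ + ρ₂).trace.re ↔
      (tInf E M0 M1 ρ₁ = ρ₁.trace.re ∧ tInf E M0 M1 ρ₂ = ρ₂.trace.re) := by
  rw [tInf_eq_trace_iff E M0 M1 hm hE hM (hρ₁.add hρ₂), tInf_eq_trace_iff E M0 M1 hm hE hM hρ₁,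
    tInf_eq_trace_iff E M0 M1 hm hE hM hρ₂, ← forall_and]
  exact forall_congr' (tSched_add_eq_trace_iff E M0 M1 hE hM hρ₁ hρ₂)

/-- `ρ₁ + ρ₂` is terminating iff `ρ₁` and `ρ₂` both are. -/
theorem terminating_add_iff (d m r : ℕ) (hd : 0 < d) (hm : 0 < m)
    (E : Fin m → Fin r → Matrix (Fin d) (Fin d) ℂ)
    (hE : ∀ i, ∑ j, (E i j)ᴴ * E i j = 1)
    (M0 M1 : Matrix (Fin d) (Fin d) ℂ)
    (hM : M0ᴴ * M0 + M1ᴴ * M1 = 1)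
    (ρ₁ ρ₂ : Matrix (Fin d) (Fin d) ℂ)
    (hρ₁ : ρ₁.PosSemidef) (hρ₂ : ρ₂.PosSemidef)
    (htr : (ρ₁ + ρ₂).trace ≤ 1) :
    tInf E M0 M1 (ρ₁ + ρ₂) = (ρ₁ + ρ₂).trace.re ↔
      (tInf E M0 M1 ρ₁ = ρ₁.trace.re ∧ tInf E M0 M1 ρ₂ = ρ₂.trace.re) :=
  terminating_add_iff_general d m r hm E hE M0 M1 hM ρ₁ ρ₂ hρ₁ hρ₂
end
end
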